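/- arXiv:1203.0905 — 2 statements merged into one kernel-verified Lean document; each statement's English description precedes it below -/
import Mathlib

section
/- (Result 1 of the paper.) Given six lines with Plücker matrices L₁,…,L₆ and a plane π, the six intersection points L₁π,…,L₆π lie on a common conic contained in π if and only if D(π, a₁, a₂, a₃, a₄) := det(ν₂(L₁π),…,ν₂(L₆π), ν₂(a₁),…,ν₂(a₄)) = 0 for all a₁,…,a₄ ∈ ℂ^4. -/
/-! The points `Lᵢπ` lie in the plane `π` because `Lᵢ` is skew. Encode a quadric by its
coefficient vector `c ∈ K¹⁰`, so that its value at `x` is `c ⬝ᵥ ν₂(x)`. The `Lᵢπ` then lie on a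
conic of `π` iff some `c` annihilates the six vectors `ν₂(Lᵢπ)` without vanishing on `π`. The
quadrics containing `π` are the products `(π ⬝ᵥ x) (l ⬝ᵥ x)`, a 4-dimensional subspace of that
annihilator, whose dimension is `10 - rank`; so such a `c` exists iff the `ν₂(Lᵢπ)` are linearly
dependent. Since the `ν₂(a)` span `K¹⁰`, six independent vectors extend by four of them to a
basis, i.e. to a nonzero determinant `D(π, a₁, …, a₄)`. -/

open Matrix

/-- The degree-2 Veronese map on R⁴. -/
def nu2four {R : Type*} [CommRing R] (x : Fin 4 → R) : Fin 10 → R :=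
  ![x 0 ^ 2, x 0 * x 1, x 0 * x 2, x 0 * x 3, x 1 ^ 2,
    x 1 * x 2, x 1 * x 3, x 2 ^ 2, x 2 * x 3, x 3 ^ 2]

/-- The plane π meets the six lines Lᵢ in points of a conic contained in π:
there is a symmetric quadratic form, not identically zero on the plane π,
vanishing at the six intersection points Lᵢπ. -/
def MeetsInConic (L : Fin 6 → Matrix (Fin 4) (Fin 4) ℂ) (π : Fin 4 → ℂ) : Prop :=
  ∃ Q : Matrix (Fin 4) (Fin 4) ℂ, Qᵀ = Q ∧
    (¬ ∀ x : Fin 4 → ℂ, π ⬝ᵥ x = 0 → x ⬝ᵥ Q.mulVec x = 0) ∧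
    ∀ i : Fin 6, ((L i).mulVec π) ⬝ᵥ Q.mulVec ((L i).mulVec π) = 0

open Module Submodule

section LinearAlgebra

variable {K V X : Type*} [Field K] [AddCommGroup V] [Module K V]

theorem det_of_cols_eq_zero_iff {n : Type*} [Fintype n] [DecidableEq n] (u : n → n → K) :
    (Matrix.of fun r c => u c r).det = 0 ↔ ¬ LinearIndependent K u := by
  rw [show (Matrix.of fun r c => u c r) = (Matrix.of u)ᵀ from rfl, det_transpose, ← not_ne_iff,
    ← isUnit_iff_ne_zero, ← isUnit_iff_isUnit_det, ← linearIndependent_rows_iff_isUnit]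
  rfl

theorem exists_linearIndependent_snoc_of_span_eq_top [FiniteDimensional K V] {f : X → V}
    (hf : span K (Set.range f) = ⊤) {n : ℕ} {v : Fin n → V} (hv : LinearIndependent K v)
    (hn : n < finrank K V) : ∃ x, LinearIndependent K (Fin.snoc v (f x)) := by
  by_contra! h
  have hle : span K (Set.range f) ≤ span K (Set.range v) := span_le.2 <| by
    rintro - ⟨x, rfl⟩
    by_contra hx
    exact h x (linearIndependent_finSnoc.2 ⟨hv, hx⟩)
  rw [hf, top_le_iff] at hle
  have := finrank_span_eq_card hv
  rw [hle, finrank_top, Fintype.card_fin] at this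
  omega

theorem exists_linearIndependent_append_of_span_eq_top [FiniteDimensional K V] {f : X → V}
    (hf : span K (Set.range f) = ⊤) {n : ℕ} {v : Fin n → V} (hv : LinearIndependent K v)
    {m : ℕ} (hm : n + m ≤ finrank K V) :
    ∃ a : Fin m → X, LinearIndependent K (Fin.append v (f ∘ a)) := by
  induction m with
  | zero =>
    exact ⟨Fin.elim0, by rw [Fin.append_right_nil _ _ rfl]; exact hv.comp _ (Fin.cast_injective _)⟩
  | succ m ih =>
    obtain ⟨a, ha⟩ := ih (by omega)
    obtain ⟨x, hx⟩ := exists_linearIndependent_snoc_of_span_eq_top hf ha (by omega)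
    exact ⟨Fin.snoc a x, by rwa [Fin.comp_snoc, Fin.append_snoc]⟩

theorem linearIndependent_iff_exists_linearIndependent_append [FiniteDimensional K V]
    {f : X → V} (hf : span K (Set.range f) = ⊤) {n m : ℕ} (v : Fin n → V)
    (hm : n + m ≤ finrank K V) :
    LinearIndependent K v ↔ ∃ a : Fin m → X, LinearIndependent K (Fin.append v (f ∘ a)) := by
  refine ⟨fun hv => exists_linearIndependent_append_of_span_eq_top hf hv hm, ?_⟩
  rintro ⟨a, ha⟩
  simpa [Function.comp_def] using ha.comp _ (Fin.castAdd_injective n m)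

theorem exists_dotProduct_eq_zero_notMem_iff {ι : Type*} [Fintype ι] {n : ℕ}
    {v : Fin n → ι → K} {W : Submodule K (ι → K)} (hW : ∀ c ∈ W, ∀ i, c ⬝ᵥ v i = 0)
    (hdim : finrank K W + n = Fintype.card ι) :
    (∃ c, (∀ i, c ⬝ᵥ v i = 0) ∧ c ∉ W) ↔ ¬ LinearIndependent K v := by
  set A := LinearMap.ker (Matrix.of v).mulVecLin
  have hA : ∀ c, c ∈ A ↔ ∀ i, c ⬝ᵥ v i = 0 := fun c => by
    simp [A, funext_iff, mulVec, dotProduct_comm]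
  have hWA : W ≤ A := fun c hc => (hA c).2 (hW c hc)
  have hrank : (Matrix.of v).rank + finrank K A = Fintype.card ι :=
    (LinearMap.finrank_range_add_finrank_ker (Matrix.of v).mulVecLin).trans (by simp)
  have hLI : LinearIndependent K v ↔ (Matrix.of v).rank = n := by
    rw [linearIndependent_iff_card_eq_finrank_span, rank_eq_finrank_span_row, Fintype.card_fin,
      eq_comm]
    rfl
  have hle : (Matrix.of v).rank ≤ n := by simpa using (Matrix.of v).rank_le_card_height
  simp_rw [← hA]
  rw [hLI, ← and_iff_right hWA (b := ∃ c ∈ A, c ∉ W), ← SetLike.lt_iff_le_and_exists]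
  constructor
  · intro hlt
    have := finrank_lt_finrank_of_lt hlt
    omega
  · intro hne
    exact lt_of_le_of_finrank_lt_finrank hWA (by omega)

theorem dotProduct_transpose_mulVec_self {R n : Type*} [CommSemiring R] [Fintype n]
    (A : Matrix n n R) (x : n → R) : x ⬝ᵥ Aᵀ *ᵥ x = x ⬝ᵥ A *ᵥ x := by
  rw [← vecMul_transpose, transpose_transpose, dotProduct_comm, dotProduct_mulVec]

theorem dotProduct_mulVec_self_eq_zero_of_transpose_eq_neg {R n : Type*} [CommRing R]
    [IsAddTorsionFree R] [Fintype n] {A : Matrix n n R} (hA : Aᵀ = -A) (x : n → R) :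
    x ⬝ᵥ A *ᵥ x = 0 := by
  rw [← self_eq_neg, ← dotProduct_neg, ← neg_mulVec, ← hA, dotProduct_transpose_mulVec_self]

end LinearAlgebra

section Veronese

variable {R K : Type*} [CommRing R] [Field K]

def quadCoeffs (Q : Matrix (Fin 4) (Fin 4) R) : Fin 10 → R :=
  ![Q 0 0, Q 0 1 + Q 1 0, Q 0 2 + Q 2 0, Q 0 3 + Q 3 0, Q 1 1,
    Q 1 2 + Q 2 1, Q 1 3 + Q 3 1, Q 2 2, Q 2 3 + Q 3 2, Q 3 3]

theorem quadCoeffs_dotProduct_nu2four (Q : Matrix (Fin 4) (Fin 4) R) (x : Fin 4 → R) :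
    quadCoeffs Q ⬝ᵥ nu2four x = x ⬝ᵥ Q *ᵥ x := by
  simp only [quadCoeffs, nu2four, dotProduct, mulVec, Fin.sum_univ_succ, Fin.sum_univ_zero,
    cons_val_zero, cons_val_succ, Fin.succ_zero_eq_one, Fin.succ_one_eq_two, Fin.reduceSucc]
  ring

def upperOfCoeffs (c : Fin 10 → R) : Matrix (Fin 4) (Fin 4) R :=
  !![c 0, c 1, c 2, c 3; 0, c 4, c 5, c 6; 0, 0, c 7, c 8; 0, 0, 0, c 9]

theorem dotProduct_upperOfCoeffs_mulVec (c : Fin 10 → R) (x : Fin 4 → R) :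
    x ⬝ᵥ upperOfCoeffs c *ᵥ x = c ⬝ᵥ nu2four x := by
  simp only [upperOfCoeffs, nu2four, dotProduct, mulVec, Fin.sum_univ_succ, Fin.sum_univ_zero,
    of_apply, cons_val', cons_val_zero, cons_val_succ, Fin.succ_zero_eq_one, Fin.succ_one_eq_two,
    Fin.reduceSucc]
  ring

theorem span_range_nu2four : span R (Set.range (nu2four (R := R))) = ⊤ := by
  let e : Fin 4 → Fin 4 → R := fun i => Pi.single i 1
  -- the coordinate of `x i * x j` is `ν(e i + e j) - ν(e i) - ν(e j)`, that of `x i ^ 2`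
  -- is `ν(e i)`
  let pts : Fin 10 → (Fin 4 → R) × (Fin 4 → R) × (Fin 4 → R) :=
    ![(e 0, 0, 0), (e 0 + e 1, e 0, e 1), (e 0 + e 2, e 0, e 2), (e 0 + e 3, e 0, e 3), (e 1, 0, 0),
      (e 1 + e 2, e 1, e 2), (e 1 + e 3, e 1, e 3), (e 2, 0, 0), (e 2 + e 3, e 2, e 3), (e 3, 0, 0)]
  have hpts : ∀ r, Pi.single r 1 =
      nu2four (pts r).1 - nu2four (pts r).2.1 - nu2four (pts r).2.2 := by
    intro r; ext s
    fin_cases r <;> fin_cases s <;> simp [pts, e, nu2four]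
  rw [eq_top_iff, ← (Pi.basisFun R (Fin 10)).span_eq, span_le]
  rintro - ⟨r, rfl⟩
  rw [Pi.basisFun_apply, hpts]
  exact sub_mem (sub_mem (subset_span ⟨_, rfl⟩) (subset_span ⟨_, rfl⟩)) (subset_span ⟨_, rfl⟩)

theorem eq_of_forall_dotProduct_nu2four_eq {c d : Fin 10 → R}
    (h : ∀ x, c ⬝ᵥ nu2four x = d ⬝ᵥ nu2four x) : c = d :=
  (dotProductEquiv R (Fin 10)).injective (LinearMap.ext_on_range span_range_nu2four h)

def planeForm (π : Fin 4 → R) : (Fin 4 → R) →ₗ[R] (Fin 10 → R) where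
  toFun l := quadCoeffs (vecMulVec π l)
  map_add' l l' := by
    ext r; fin_cases r <;> simp [quadCoeffs, vecMulVec_apply] <;> ring
  map_smul' t l := by
    ext r; fin_cases r <;> simp [quadCoeffs, vecMulVec_apply] <;> ring

theorem planeForm_dotProduct_nu2four (π l x : Fin 4 → R) :
    planeForm π l ⬝ᵥ nu2four x = (π ⬝ᵥ x) * (l ⬝ᵥ x) := by
  simp only [planeForm, quadCoeffs, nu2four, dotProduct, vecMulVec_apply, LinearMap.coe_mk,
    AddHom.coe_mk, Fin.sum_univ_succ, Fin.sum_univ_zero, cons_val_zero, cons_val_succ,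
    Fin.succ_zero_eq_one, Fin.succ_one_eq_two, Fin.reduceSucc]
  ring

theorem planeForm_injective [IsDomain R] {π : Fin 4 → R} (hπ : π ≠ 0) :
    Function.Injective (planeForm π) := by
  rw [← LinearMap.ker_eq_bot, LinearMap.ker_eq_bot']
  intro l hl
  have h : ∀ x, (π ⬝ᵥ x) * (l ⬝ᵥ x) = 0 := fun x => by
    rw [← planeForm_dotProduct_nu2four, hl, zero_dotProduct]
  obtain ⟨k, hk⟩ : ∃ k, π k ≠ 0 := Function.ne_iff.mp hπ
  by_contra hl0
  obtain ⟨j, hj⟩ : ∃ j, l j ≠ 0 := Function.ne_iff.mp hl0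
  have hlk : l k = 0 := by simpa [hk] using h (Pi.single k 1)
  have hπj : π j = 0 := by simpa [hj] using h (Pi.single j 1)
  have := h (Pi.single k 1 + Pi.single j 1)
  simp only [dotProduct_add, dotProduct_single, mul_one, hπj, add_zero, hlk, zero_add,
    mul_eq_zero] at this
  tauto

theorem mem_range_planeForm_iff {π : Fin 4 → K} (hπ : π ≠ 0) (c : Fin 10 → K) :
    c ∈ LinearMap.range (planeForm π) ↔ ∀ x, π ⬝ᵥ x = 0 → c ⬝ᵥ nu2four x = 0 := by
  refine ⟨?_, fun h => ?_⟩
  · rintro ⟨l, rfl⟩ x hx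
    rw [planeForm_dotProduct_nu2four, hx, zero_mul]
  obtain ⟨k, hk⟩ : ∃ k, π k ≠ 0 := Function.ne_iff.mp hπ
  set u : Fin 4 → K := (π k)⁻¹ • Pi.single k 1
  have hu : π ⬝ᵥ u = 1 := by simp [u, hk]
  set T := upperOfCoeffs c
  -- `x - (π ⬝ᵥ x) • u` lies in the plane; expanding `T` at it exhibits the factor `π ⬝ᵥ x`.
  refine ⟨u ᵥ* T + T *ᵥ u - (u ⬝ᵥ T *ᵥ u) • π, eq_of_forall_dotProduct_nu2four_eq fun x => ?_⟩
  have hx := h (x - (π ⬝ᵥ x) • u) (by simp [dotProduct_sub, hu])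
  rw [← dotProduct_upperOfCoeffs_mulVec] at hx
  rw [planeForm_dotProduct_nu2four, ← dotProduct_upperOfCoeffs_mulVec]
  simp only [mulVec_sub, mulVec_smul, sub_dotProduct, dotProduct_sub, smul_dotProduct,
    dotProduct_smul, add_dotProduct, smul_eq_mul, ← dotProduct_mulVec] at hx ⊢
  rw [dotProduct_comm (T *ᵥ u) x]
  linear_combination -hx

theorem exists_coeffs_vanishing_not_on_plane_iff {π : Fin 4 → K} (hπ : π ≠ 0)
    {p : Fin 6 → Fin 4 → K} (hp : ∀ i, π ⬝ᵥ p i = 0) :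
    (∃ c, (∀ i, c ⬝ᵥ nu2four (p i) = 0) ∧ ∃ x, π ⬝ᵥ x = 0 ∧ c ⬝ᵥ nu2four x ≠ 0) ↔
      ¬ LinearIndependent K (fun i => nu2four (p i)) := by
  have hW : ∀ c ∈ LinearMap.range (planeForm π), ∀ i, c ⬝ᵥ nu2four (p i) = 0 :=
    fun c hc i => (mem_range_planeForm_iff hπ c).1 hc _ (hp i)
  have hdim : finrank K (LinearMap.range (planeForm π)) + 6 = Fintype.card (Fin 10) := by
    rw [LinearMap.finrank_range_of_inj (planeForm_injective hπ)]
    simp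
  rw [← exists_dotProduct_eq_zero_notMem_iff hW hdim]
  simp only [mem_range_planeForm_iff hπ, not_forall, exists_prop]

theorem forall_det_nu2four_eq_zero_iff (p : Fin 6 → Fin 4 → K) :
    (∀ a : Fin 4 → Fin 4 → K, (Matrix.of fun r c : Fin 10 =>
        Fin.append (fun i => nu2four (p i)) (fun j => nu2four (a j)) c r).det = 0) ↔
      ¬ LinearIndependent K (fun i => nu2four (p i)) := by
  rw [linearIndependent_iff_exists_linearIndependent_append span_range_nu2four _ (m := 4)
    (by simp)]
  simp only [det_of_cols_eq_zero_iff, not_exists]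
  rfl

end Veronese

theorem meetsInConic_iff (L : Fin 6 → Matrix (Fin 4) (Fin 4) ℂ) (π : Fin 4 → ℂ) :
    MeetsInConic L π ↔ ∃ c, (∀ i, c ⬝ᵥ nu2four ((L i) *ᵥ π) = 0) ∧
      ∃ x, π ⬝ᵥ x = 0 ∧ c ⬝ᵥ nu2four x ≠ 0 := by
  constructor
  · rintro ⟨Q, -, hQπ, hQL⟩
    push Not at hQπ
    simp only [← quadCoeffs_dotProduct_nu2four] at hQπ hQL
    exact ⟨quadCoeffs Q, hQL, hQπ⟩
  · rintro ⟨c, hcL, hcπ⟩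
    set Q := (2 : ℂ)⁻¹ • (upperOfCoeffs c + (upperOfCoeffs c)ᵀ)
    have hQ : ∀ x, x ⬝ᵥ Q *ᵥ x = c ⬝ᵥ nu2four x := fun x => by
      simp only [Q, smul_mulVec, add_mulVec, dotProduct_smul, dotProduct_add,
        dotProduct_transpose_mulVec_self, dotProduct_upperOfCoeffs_mulVec, smul_eq_mul]
      ring
    obtain ⟨x, hx, hcx⟩ := hcπ
    exact ⟨Q, by simp [Q, add_comm], fun hQπ => hcx (hQ x ▸ hQπ x hx),
      fun i => (hQ _).trans (hcL i)⟩

/-- (Result 1.)  The six intersection points L₁π,…,L₆π lie on a common conic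
contained in π iff D(π,a₁,…,a₄) = det(ν₂(L₁π),…,ν₂(L₆π),ν₂(a₁),…,ν₂(a₄)) = 0
for all a₁,…,a₄ ∈ ℂ⁴. -/
theorem stmt12 (L : Fin 6 → Matrix (Fin 4) (Fin 4) ℂ)
    (hL : ∀ i, (L i)ᵀ = -(L i) ∧ (L i).rank = 2) (π : Fin 4 → ℂ)
    (hLπ : ∀ i, (L i).mulVec π ≠ 0) :
    MeetsInConic L π ↔
      ∀ a : Fin 4 → Fin 4 → ℂ,
        Matrix.det (Matrix.of fun r c : Fin 10 =>
          Fin.append (fun i : Fin 6 => nu2four ((L i).mulVec π))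
            (fun j : Fin 4 => nu2four (a j)) c r) = 0 := by
  have hπ : π ≠ 0 := fun h => hLπ 0 (by rw [h, mulVec_zero])
  have hLπ_mem : ∀ i, π ⬝ᵥ (L i) *ᵥ π = 0 := fun i =>
    dotProduct_mulVec_self_eq_zero_of_transpose_eq_neg (hL i).1 π
  rw [meetsInConic_iff, exists_coeffs_vanishing_not_on_plane_iff hπ hLπ_mem,
    forall_det_nu2four_eq_zero_iff]
end

section
/- The polynomial D(π, a₁,…,a₄) = det(ν₂(L₁π),…,ν₂(L₆π), ν₂(a₁),…,ν₂(a₄)) vanishes whenever the four points a₁,…,a₄ are coplanar (i.e., det(a₁,a₂,a₃,a₄) = 0); hence det(a₁,…,a₄) divides D. -/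
/-!
If a₁,…,a₄ lie on a plane `l = 0`, the reducible quadric `(l·x)(π·x) = 0` (or `(l·x)² = 0`
when `π = 0`) contains all ten points a₁,…,a₄, L₁π,…,L₆π (the latter because `π·Lπ = 0` for
antisymmetric `L`); its coefficient vector is a nonzero linear relation between the ten
Veronese images, so `D = 0`. The generic determinant det(a₁,…,a₄) is a prime polynomial, hence
by the Nullstellensatz it divides every polynomial vanishing on its zero locus.
-/

open Matrix MvPolynomial

/-- Variables: the coordinates of the plane π and of the four points a₁,…,a₄. -/
abbrev SLCVVars : Type := (Fin 4) ⊕ (Fin 4 × Fin 4)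

/-- The coordinates of π as polynomial variables. -/
noncomputable def piVar : Fin 4 → MvPolynomial SLCVVars ℂ := fun i => X (Sum.inl i)

/-- The coordinates of the point aⱼ as polynomial variables. -/
noncomputable def aVar : Fin 4 → Fin 4 → MvPolynomial SLCVVars ℂ :=
  fun j i => X (Sum.inr (j, i))

/-- The polynomial D(π,a₁,…,a₄) = det(ν₂(L₁π),…,ν₂(L₆π),ν₂(a₁),…,ν₂(a₄)),
seen as a polynomial in the coordinates of π and of the aⱼ. -/
noncomputable def Dpoly (L : Fin 6 → Matrix (Fin 4) (Fin 4) ℂ) :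
    MvPolynomial SLCVVars ℂ :=
  Matrix.det (Matrix.of fun r c : Fin 10 =>
    Fin.append (fun i : Fin 6 => nu2four (((L i).map MvPolynomial.C).mulVec piVar))
      (fun j : Fin 4 => nu2four (aVar j)) c r)

theorem Matrix.det_eq_mul_det_submatrix_add_det_erase_corner {R : Type*} [CommRing R] {n : ℕ}
    (A : Matrix (Fin (n + 1)) (Fin (n + 1)) R) :
    A.det = A 0 0 * (A.submatrix Fin.succ Fin.succ).det +
      (of fun i j => if i = 0 ∧ j = 0 then 0 else A i j).det := by
  set A₀ : Matrix (Fin (n + 1)) (Fin (n + 1)) R :=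
    of fun i j => if i = 0 ∧ j = 0 then 0 else A i j
  have hminor : ∀ c : Fin n → Fin (n + 1), A₀.submatrix Fin.succ c = A.submatrix Fin.succ c :=
    fun c => by ext i j; simp [A₀]
  have hrow : ∀ j : Fin n, A₀ 0 j.succ = A 0 j.succ := fun j => by simp [A₀]
  have hcorner : A₀ 0 0 = 0 := by simp [A₀]
  rw [det_succ_row_zero A, det_succ_row_zero A₀, Fin.sum_univ_succ, Fin.sum_univ_succ (n := n)]
  simp only [hminor, hrow, hcorner, Fin.succAbove_zero, Fin.val_zero, pow_zero, one_mul,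
    zero_mul, zero_add]

namespace MvPolynomial

variable {σ R : Type*} [CommRing R]

theorem det_mem_supported {n : Type*} [Fintype n] [DecidableEq n] {s : Set σ}
    (M : Matrix n n (MvPolynomial σ R)) (hM : ∀ i j, M i j ∈ supported R s) :
    M.det ∈ supported R s := by
  let M' : Matrix n n (supported R s) := of fun i j => ⟨M i j, hM i j⟩
  have hM' : (supported R s).val.mapMatrix M' = M := rfl
  rw [← hM', ← AlgHom.map_det]
  exact M'.det.2

theorem exists_eval_X_eq_of_injective {ι : Type*} {e : ι → σ} (he : Function.Injective e)
    (y : ι → R) : ∃ x : σ → R, ∀ i, x (e i) = y i :=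
  ⟨Function.extend e y 0, he.extend_apply y 0⟩

-- At the permutation matrix of `swap 0 1` the minor vanishes while the determinant is `-1`.
theorem not_det_submatrix_succ_dvd_det_erase_corner [Nontrivial R] {n : ℕ}
    {e : Fin (n + 2) × Fin (n + 2) → σ} (he : Function.Injective e) :
    ¬ ((of fun i j => (X (e (i, j)) : MvPolynomial σ R)).submatrix Fin.succ Fin.succ).det ∣
      (of fun i j => if i = 0 ∧ j = 0 then 0 else (X (e (i, j)) : MvPolynomial σ R)).det := by
  set P := (Equiv.swap (0 : Fin (n + 2)) 1).permMatrix R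
  obtain ⟨x, hx⟩ := exists_eval_X_eq_of_injective he fun p => P p.1 p.2
  have hminor : (eval x).mapMatrix ((of fun i j => X (e (i, j))).submatrix Fin.succ Fin.succ) =
      P.submatrix Fin.succ Fin.succ := by
    ext i j; simp [hx]
  have hcorner : (eval x).mapMatrix (of fun i j => if i = 0 ∧ j = 0 then 0 else X (e (i, j))) =
      P := by
    ext i j
    by_cases hij : i = 0 ∧ j = 0
    · obtain ⟨rfl, rfl⟩ := hij
      simp [P]
    · simp only [of_apply, if_neg hij, RingHom.mapMatrix_apply, map_apply, eval_X, hx]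
  have hsingular : (P.submatrix Fin.succ Fin.succ).det = 0 :=
    det_eq_zero_of_row_eq_zero 0 fun j => by simp [P, (Fin.succ_ne_zero j).symm]
  intro hdvd
  have h := map_dvd (eval x) hdvd
  rw [RingHom.map_det, RingHom.map_det, hminor, hcorner, hsingular, zero_dvd_iff] at h
  simp [P] at h

theorem prime_det_of_injective [IsDomain R] [UniqueFactorizationMonoid R] :
    ∀ {n : ℕ} {e : Fin (n + 1) × Fin (n + 1) → σ}, Function.Injective e →
      Prime (of fun i j => (X (e (i, j)) : MvPolynomial σ R)).det
  | 0, e, _ => by simpa [det_unique] using X_prime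
  | n + 1, e, he => by
    set A : Matrix (Fin (n + 2)) (Fin (n + 2)) (MvPolynomial σ R) := of fun i j => X (e (i, j))
    set A₀ : Matrix (Fin (n + 2)) (Fin (n + 2)) (MvPolynomial σ R) :=
      of fun i j => if i = 0 ∧ j = 0 then 0 else X (e (i, j))
    set f := (A.submatrix Fin.succ Fin.succ).det
    have hf : Prime f := prime_det_of_injective (n := n) (e := e ∘ Prod.map Fin.succ Fin.succ)
      (he.comp (Prod.map_injective.2 ⟨Fin.succ_injective _, Fin.succ_injective _⟩))
    have hdet : A.det = f * X (e (0, 0)) + A₀.det := by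
      rw [det_eq_mul_det_submatrix_add_det_erase_corner, mul_comm]
      rfl
    have hfs : f ∈ supported R {e (0, 0)}ᶜ := by
      refine det_mem_supported _ fun i j => ?_
      simpa [A, X_mem_supported] using he.ne (by simp)
    have hgs : A₀.det ∈ supported R {e (0, 0)}ᶜ := by
      refine det_mem_supported _ fun i j => ?_
      by_cases hij : i = 0 ∧ j = 0
      · simp only [A₀, of_apply, if_pos hij, zero_mem]
      · simp only [A₀, of_apply, if_neg hij, X_mem_supported]
        exact he.ne fun h => hij (Prod.ext_iff.1 h)
    rw [hdet]
    refine (irreducible_mul_X_add f A₀.det _ hf.ne_zero ?_ ?_ ?_).prime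
    · simpa [mem_supported] using hfs
    · simpa [mem_supported] using hgs
    · exact hf.irreducible.isRelPrime_iff_not_dvd.2
        (not_det_submatrix_succ_dvd_det_erase_corner he)

theorem dvd_of_forall_eval_eq_zero {K : Type*} [Field K] [IsAlgClosed K] [Finite σ]
    {p q : MvPolynomial σ K} (hp : Prime p) (h : ∀ x, eval x p = 0 → eval x q = 0) :
    p ∣ q := by
  have : (Ideal.span {p}).IsPrime := (Ideal.span_singleton_prime hp.ne_zero).2 hp
  rw [← Ideal.mem_span_singleton, ← IsPrime.vanishingIdeal_zeroLocus (Ideal.span {p}) (K := K),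
    mem_vanishingIdeal_iff]
  exact fun x hx => h x (hx p (Ideal.mem_span_singleton_self p))

end MvPolynomial

theorem Matrix.dotProduct_mulVec_self_eq_zero {R n : Type*} [CommRing R] [IsAddTorsionFree R]
    [Fintype n] {A : Matrix n n R} (hA : Aᵀ = -A) (v : n → R) : v ⬝ᵥ (A *ᵥ v) = 0 :=
  self_eq_neg.1 <| by
    conv_lhs => rw [dotProduct_mulVec, ← mulVec_transpose, hA, neg_mulVec, neg_dotProduct,
      dotProduct_comm]

theorem exists_dotProduct_mul_dotProduct_ne_zero {R n : Type*} [CommRing R] [IsDomain R]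
    [Fintype n] [DecidableEq n] {l m : n → R} (hl : l ≠ 0) (hm : m ≠ 0) :
    ∃ x, (l ⬝ᵥ x) * (m ⬝ᵥ x) ≠ 0 := by
  obtain ⟨i, hi⟩ := Function.ne_iff.1 hl
  obtain ⟨j, hj⟩ := Function.ne_iff.1 hm
  have hli : l ⬝ᵥ Pi.single i 1 ≠ 0 := by simpa using hi
  have hmj : m ⬝ᵥ Pi.single j 1 ≠ 0 := by simpa using hj
  by_cases hmi : m ⬝ᵥ Pi.single i 1 = 0
  · by_cases hlj : l ⬝ᵥ Pi.single j 1 = 0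
    · refine ⟨Pi.single i 1 + Pi.single j 1, ?_⟩
      rw [dotProduct_add, dotProduct_add, hmi, hlj, add_zero, zero_add]
      exact mul_ne_zero hli hmj
    · exact ⟨Pi.single j 1, mul_ne_zero hlj hmj⟩
  · exact ⟨Pi.single i 1, mul_ne_zero hli hmi⟩

section Veronese

variable {R : Type*} [CommRing R]

theorem map_nu2four {S : Type*} [CommRing S] (f : R →+* S) (x : Fin 4 → R) :
    f ∘ nu2four x = nu2four (f ∘ x) := by
  ext r; fin_cases r <;> simp [nu2four]

def quadricCoeffs (l m : Fin 4 → R) : Fin 10 → R :=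
  ![l 0 * m 0, l 0 * m 1 + l 1 * m 0, l 0 * m 2 + l 2 * m 0, l 0 * m 3 + l 3 * m 0,
    l 1 * m 1, l 1 * m 2 + l 2 * m 1, l 1 * m 3 + l 3 * m 1, l 2 * m 2,
    l 2 * m 3 + l 3 * m 2, l 3 * m 3]

theorem quadricCoeffs_dotProduct_nu2four (l m x : Fin 4 → R) :
    quadricCoeffs l m ⬝ᵥ nu2four x = (l ⬝ᵥ x) * (m ⬝ᵥ x) := by
  simp [quadricCoeffs, nu2four, dotProduct, Fin.sum_univ_succ]
  ring

theorem quadricCoeffs_ne_zero [IsDomain R] {l m : Fin 4 → R} (hl : l ≠ 0) (hm : m ≠ 0) :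
    quadricCoeffs l m ≠ 0 := by
  obtain ⟨x, hx⟩ := exists_dotProduct_mul_dotProduct_ne_zero hl hm
  intro h
  rw [← quadricCoeffs_dotProduct_nu2four, h, zero_dotProduct] at hx
  exact hx rfl

theorem det_nu2four_eq_zero_of_mem_quadric {K : Type*} [Field K] {p : Fin 10 → Fin 4 → K}
    {l m : Fin 4 → K} (hl : l ≠ 0) (hm : m ≠ 0) (hp : ∀ c, (l ⬝ᵥ p c) * (m ⬝ᵥ p c) = 0) :
    (of fun r c => nu2four (p c) r).det = 0 := by
  rw [← det_transpose, ← exists_mulVec_eq_zero_iff]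
  refine ⟨quadricCoeffs l m, quadricCoeffs_ne_zero hl hm, funext fun c => ?_⟩
  change nu2four (p c) ⬝ᵥ quadricCoeffs l m = 0
  rw [dotProduct_comm, quadricCoeffs_dotProduct_nu2four]
  exact hp c

end Veronese

theorem eval_Dpoly (L : Fin 6 → Matrix (Fin 4) (Fin 4) ℂ) (π : Fin 4 → ℂ)
    (a : Fin 4 → Fin 4 → ℂ) :
    eval (Sum.elim π fun p => a p.1 p.2) (Dpoly L) =
      (of fun r c => nu2four (Fin.append (fun i => L i *ᵥ π) a c) r).det := by
  rw [Dpoly, RingHom.map_det]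
  congr 1
  ext r c
  refine Fin.addCases (m := 6) (n := 4) (fun i => ?_) (fun j => ?_) c
  · simp only [RingHom.mapMatrix_apply, map_apply, of_apply, Fin.append_left]
    rw [← Function.comp_apply (f := eval _), map_nu2four]
    congr 2
    ext k
    simp [mulVec, dotProduct, piVar]
  · simp only [RingHom.mapMatrix_apply, map_apply, of_apply, Fin.append_right]
    rw [← Function.comp_apply (f := eval _), map_nu2four]
    congr 1
    ext k
    simp [aVar]

theorem eval_Dpoly_eq_zero_of_det_eq_zero (L : Fin 6 → Matrix (Fin 4) (Fin 4) ℂ)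
    (hL : ∀ i, (L i)ᵀ = -L i) (π : Fin 4 → ℂ) (a : Fin 4 → Fin 4 → ℂ)
    (ha : (of fun i j => a j i).det = 0) :
    eval (Sum.elim π fun p => a p.1 p.2) (Dpoly L) = 0 := by
  obtain ⟨l, hl, hla⟩ : ∃ l ≠ 0, of a *ᵥ l = 0 := by
    rwa [exists_mulVec_eq_zero_iff, ← det_transpose]
  obtain ⟨m, hm, hmL⟩ : ∃ m ≠ 0, ∀ i, m ⬝ᵥ (L i *ᵥ π) = 0 := by
    by_cases hπ : π = 0
    · exact ⟨l, hl, fun i => by simp [hπ]⟩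
    · exact ⟨π, hπ, fun i => dotProduct_mulVec_self_eq_zero (hL i) π⟩
  rw [eval_Dpoly]
  refine det_nu2four_eq_zero_of_mem_quadric hl hm fun c => ?_
  refine Fin.addCases (m := 6) (n := 4) (fun i => ?_) (fun j => ?_) c
  · rw [Fin.append_left, hmL, mul_zero]
  · have hlj : a j ⬝ᵥ l = 0 := congrFun hla j
    rw [Fin.append_right, dotProduct_comm, hlj, zero_mul]

/-- D vanishes whenever the four points a₁,…,a₄ are coplanar; hence
det(a₁,…,a₄) divides D. -/
theorem stmt15 (L : Fin 6 → Matrix (Fin 4) (Fin 4) ℂ)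
    (hL : ∀ i, (L i)ᵀ = -(L i) ∧ (L i).rank = 2) :
    (∀ (π : Fin 4 → ℂ) (a : Fin 4 → Fin 4 → ℂ),
        Matrix.det (Matrix.of fun i j : Fin 4 => a j i) = 0 →
        MvPolynomial.eval (Sum.elim π fun p => a p.1 p.2) (Dpoly L) = 0) ∧
      Matrix.det (Matrix.of fun i j : Fin 4 => aVar j i) ∣ Dpoly L := by
  have hvanish := eval_Dpoly_eq_zero_of_det_eq_zero L fun i => (hL i).1
  refine ⟨hvanish, dvd_of_forall_eval_eq_zero ?_ fun x hx => ?_⟩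
  · exact prime_det_of_injective (e := fun p => Sum.inr (p.2, p.1)) fun p q h => by
      simpa [Prod.ext_iff, and_comm] using h
  · have hxa : (of fun i j => x (Sum.inr (j, i))).det = 0 := by
      rw [← hx, RingHom.map_det]
      congr 1
      ext i j
      simp [aVar]
    rw [← Sum.elim_comp_inl_inr x]
    exact hvanish (x ∘ Sum.inl) (fun j i => x (Sum.inr (j, i))) hxa
end
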